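/- arXiv:2401.16198 — 3 statements merged into one kernel-verified Lean document; each statement's English description precedes it below -/
import Mathlib

section
/- For every valid dynamic linear contract π there exists a valid free-fall dynamic linear contract π′ with Util(π′) ≥ Util(π). (Free-fall contracts are optimal among dynamic linear contracts.) -/
/-!
Validity makes the agent's cumulative payoff equal to `T · (ᾱ R_{a^K} - c_{a^K})`, the payoff of
the final average contract `ᾱ = A / T` over the whole horizon (`A = ∑ α^k τ^k`, `T = ∑ τ^k`).
Since every best response to `ᾱ` earns the same, this depends only on `A` and `T`, and the
principal can gain only through the welfare `∑ τ^k W(a^k)`, `W = R - c`.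

`W` is increasing, and the agent plays above action `i` only while the running average is at
least `α_{i,i+1}`, so the time `t_i` spent above `i` is at most `A / α_{i,i+1}`. Slicing welfare
by levels, `∑ τ^k W(a^k) ≤ T W(s) + ∑_{s ≤ i < n} (W(i+1) - W(i)) t_i`, where `s` is the largest
best response to `ᾱ`. The free-fall contract that pays `A` in its first segment and nothing
afterwards, walking down from action `n` to `s` over total time `T`, attains every bound
`t_i = A / α_{i,i+1}` with equality.
-/

open Finset

/-- Indifference point `α_{i,i+1}` between actions `i` and `i+1`. -/
noncomputable def indiff (c R : ℕ → ℝ) (i : ℕ) : ℝ :=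
  (c (i + 1) - c i) / (R (i + 1) - R i)

/-- Breakpoint `α_{i,i+1}` with the convention `α_{0,1} := 0`. -/
noncomputable def bp (c R : ℕ → ℝ) (i : ℕ) : ℝ :=
  if i = 0 then 0 else indiff c R i

/-- A linear contract instance with `n ≥ 2` actions indexed `1,…,n`:
costs `0 = c_1 < … < c_n`, rewards `0 ≤ R_1 < … < R_n`, and indifference
points satisfying `0 < α_{1,2} < … < α_{n-1,n} ≤ 1`. -/
def LinInstance (n : ℕ) (c R : ℕ → ℝ) : Prop :=
  2 ≤ n ∧ c 1 = 0 ∧ 0 ≤ R 1 ∧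
    (∀ i, 1 ≤ i → i < n → c i < c (i + 1)) ∧
    (∀ i, 1 ≤ i → i < n → R i < R (i + 1)) ∧
    0 < indiff c R 1 ∧
    (∀ i, 1 ≤ i → i + 1 ≤ n - 1 → indiff c R i < indiff c R (i + 1)) ∧
    indiff c R (n - 1) ≤ 1

/-- Best-response set of the agent to the linear contract with scalar `x`. -/
def BR (n : ℕ) (c R : ℕ → ℝ) (x : ℝ) : Set ℕ :=
  {i | i ∈ Finset.Icc 1 n ∧ ∀ j ∈ Finset.Icc 1 n, x * R j - c j ≤ x * R i - c i}

/-- A dynamic linear contract with `K` segments (indexed `1,…,K`):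
scalars `α`, durations `τ`, and actions `a`. -/
structure DLC where
  K : ℕ
  α : ℕ → ℝ
  τ : ℕ → ℝ
  a : ℕ → ℕ

namespace DLC

/-- Total duration of the first `k` segments. -/
noncomputable def Tsum (π : DLC) (k : ℕ) : ℝ := ∑ j ∈ Finset.Icc 1 k, π.τ j

/-- Cumulative scalar contract of the first `k` segments. -/
noncomputable def Asum (π : DLC) (k : ℕ) : ℝ := ∑ j ∈ Finset.Icc 1 k, π.α j * π.τ j

/-- Time-averaged contract `ᾱ^k` after the first `k` segments. -/
noncomputable def avg (π : DLC) (k : ℕ) : ℝ := π.Asum k / π.Tsum k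

/-- Validity: positive durations, nonnegative scalars, actions in `{1,…,n}`,
and each action is a best response to the historical average contract at the
end of its segment, and (for `k ≥ 2`) also at its beginning. -/
def Valid (n : ℕ) (c R : ℕ → ℝ) (π : DLC) : Prop :=
  1 ≤ π.K ∧
    (∀ k ∈ Finset.Icc 1 π.K, 0 ≤ π.α k ∧ 0 < π.τ k ∧ π.a k ∈ Finset.Icc 1 n) ∧
    (∀ k ∈ Finset.Icc 1 π.K, π.a k ∈ BR n c R (π.avg k)) ∧
    (∀ k, 2 ≤ k → k ≤ π.K → π.a k ∈ BR n c R (π.avg (k - 1)))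

/-- Time-averaged principal utility. -/
noncomputable def Util (R : ℕ → ℝ) (π : DLC) : ℝ :=
  (∑ k ∈ Finset.Icc 1 π.K, π.τ k * (1 - π.α k) * R (π.a k)) / π.Tsum π.K

/-- Time-averaged agent utility. -/
noncomputable def UtilA (c R : ℕ → ℝ) (π : DLC) : ℝ :=
  (∑ k ∈ Finset.Icc 1 π.K, π.τ k * (π.α k * R (π.a k) - c (π.a k))) / π.Tsum π.K

/-- Free-fall: the zero contract is offered on every segment after the first. -/
def FreeFall (π : DLC) : Prop := ∀ k, 2 ≤ k → k ≤ π.K → π.α k = 0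

/-- Cumulative principal utility `u_P^{(t)}(π)` up to time `t`. -/
noncomputable def cumUtil (R : ℕ → ℝ) (π : DLC) (t : ℝ) : ℝ :=
  ∑ k ∈ Finset.Icc 1 π.K,
    (min t (π.Tsum k) - min t (π.Tsum (k - 1))) * (1 - π.α k) * R (π.a k)

/-- Cumulative scalar contract `A^{(t)}` up to time `t`. -/
noncomputable def cumA (π : DLC) (t : ℝ) : ℝ :=
  ∑ k ∈ Finset.Icc 1 π.K, (min t (π.Tsum k) - min t (π.Tsum (k - 1))) * π.α k

end DLC

theorem payoff_eq_of_mem_BR {n : ℕ} {c R : ℕ → ℝ} {x : ℝ} {i j : ℕ}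
    (hi : i ∈ BR n c R x) (hj : j ∈ BR n c R x) : x * R i - c i = x * R j - c j :=
  le_antisymm (hj.2 i hi.1) (hi.2 j hj.1)

namespace LinInstance

variable {n : ℕ} {c R : ℕ → ℝ}

theorem reward_lt_succ (h : LinInstance n c R) {i : ℕ} (hi : 1 ≤ i) (hin : i < n) :
    R i < R (i + 1) :=
  h.2.2.2.2.1 i hi hin

theorem payoff_succ_sub (h : LinInstance n c R) (x : ℝ) {i : ℕ} (hi : 1 ≤ i) (hin : i < n) :
    (x * R (i + 1) - c (i + 1)) - (x * R i - c i) = (x - indiff c R i) * (R (i + 1) - R i) := by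
  have := (h.reward_lt_succ hi hin).ne'
  rw [indiff]
  field_simp
  ring

theorem indiff_strictMonoOn (h : LinInstance n c R) :
    StrictMonoOn (indiff c R) (Set.Icc 1 (n - 1)) :=
  strictMonoOn_of_lt_succ Set.ordConnected_Icc fun i _ hi hi' ↦
    h.2.2.2.2.2.2.1 i hi.1 (by simpa using hi'.2)

theorem indiff_le_indiff (h : LinInstance n c R) {i j : ℕ} (hi : 1 ≤ i) (hij : i ≤ j)
    (hjn : j < n) : indiff c R i ≤ indiff c R j :=
  h.indiff_strictMonoOn.monotoneOn ⟨hi, by omega⟩ ⟨by omega, by omega⟩ hij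

theorem indiff_pos (h : LinInstance n c R) {i : ℕ} (hi : 1 ≤ i) (hin : i < n) :
    0 < indiff c R i :=
  h.2.2.2.2.2.1.trans_le (h.indiff_le_indiff le_rfl hi hin)

theorem indiff_le_one (h : LinInstance n c R) {i : ℕ} (hi : 1 ≤ i) (hin : i < n) :
    indiff c R i ≤ 1 :=
  (h.indiff_le_indiff hi (by omega) (by omega)).trans h.2.2.2.2.2.2.2

theorem payoff_monotoneOn (h : LinInstance n c R) {x : ℝ} {i : ℕ}
    (hx : ∀ m, 1 ≤ m → m < i → indiff c R m ≤ x) (hin : i ≤ n) :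
    MonotoneOn (fun j ↦ x * R j - c j) (Set.Icc 1 i) :=
  monotoneOn_of_le_succ Set.ordConnected_Icc fun m _ hm hm' ↦ by
    simp only [Set.mem_Icc, Order.succ_eq_add_one] at hm hm' ⊢
    have := h.payoff_succ_sub x hm.1 (by omega)
    nlinarith [hx m hm.1 (by omega), h.reward_lt_succ hm.1 (by omega)]

theorem payoff_antitoneOn (h : LinInstance n c R) {x : ℝ} {i : ℕ} (hi : 1 ≤ i)
    (hx : ∀ m, i ≤ m → m < n → x ≤ indiff c R m) :
    AntitoneOn (fun j ↦ x * R j - c j) (Set.Icc i n) :=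
  antitoneOn_of_succ_le Set.ordConnected_Icc fun m _ hm hm' ↦ by
    simp only [Set.mem_Icc, Order.succ_eq_add_one] at hm hm' ⊢
    have := h.payoff_succ_sub x (hi.trans hm.1) (by omega)
    nlinarith [hx m hm.1 (by omega), h.reward_lt_succ (hi.trans hm.1) (by omega)]

theorem welfare_monotoneOn (h : LinInstance n c R) :
    MonotoneOn (fun j ↦ R j - c j) (Set.Icc 1 n) := by
  simpa using h.payoff_monotoneOn (x := 1) (fun m hm hmn ↦ h.indiff_le_one hm hmn) le_rfl

theorem mem_BR_of_indiff (h : LinInstance n c R) {x : ℝ} {i : ℕ} (hi : 1 ≤ i) (hin : i ≤ n)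
    (hlo : 2 ≤ i → indiff c R (i - 1) ≤ x) (hhi : i < n → x ≤ indiff c R i) :
    i ∈ BR n c R x := by
  refine ⟨mem_Icc.2 ⟨hi, hin⟩, fun j hj ↦ ?_⟩
  obtain ⟨hj1, hjn⟩ := mem_Icc.1 hj
  rcases le_total j i with hji | hij
  · refine h.payoff_monotoneOn (fun m hm hmi ↦ ?_) hin ⟨hj1, hji⟩ ⟨hi, le_rfl⟩ hji
    exact (h.indiff_le_indiff hm (by omega) (by omega)).trans (hlo (by omega))
  · refine h.payoff_antitoneOn hi (fun m hm hmn ↦ ?_) ⟨le_rfl, hin⟩ ⟨hij, hjn⟩ hij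
    exact (hhi (by omega)).trans (h.indiff_le_indiff hi hm hmn)

theorem mem_BR_indiff (h : LinInstance n c R) {i : ℕ} (hi : 1 ≤ i) (hin : i < n) :
    i ∈ BR n c R (indiff c R i) :=
  h.mem_BR_of_indiff hi hin.le (fun _ ↦ h.indiff_le_indiff (by omega) (by omega) hin)
    fun _ ↦ le_rfl

theorem succ_mem_BR_indiff (h : LinInstance n c R) {i : ℕ} (hi : 1 ≤ i) (hin : i < n) :
    i + 1 ∈ BR n c R (indiff c R i) :=
  h.mem_BR_of_indiff (by omega) hin (fun _ ↦ le_rfl)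
    fun _ ↦ h.indiff_le_indiff hi (by omega) (by omega)

theorem indiff_le_of_mem_BR (h : LinInstance n c R) {x : ℝ} {i m : ℕ} (hBR : i ∈ BR n c R x)
    (hm : 1 ≤ m) (hmi : m < i) : indiff c R m ≤ x := by
  obtain ⟨hi, hmax⟩ := hBR
  obtain ⟨p, rfl⟩ : ∃ p, i = p + 1 := ⟨i - 1, by omega⟩
  have hpn := (mem_Icc.1 hi).2
  have hstep := h.payoff_succ_sub x (i := p) (by omega) (by omega)
  have hp : indiff c R p ≤ x := by
    nlinarith [hmax p (mem_Icc.2 ⟨by omega, by omega⟩), h.reward_lt_succ (by omega) hpn]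
  exact (h.indiff_le_indiff hm (by omega) (by omega)).trans hp

/-- `s` is the largest best response to `x`. -/
theorem exists_top_mem_BR (h : LinInstance n c R) (x : ℝ) :
    ∃ s, 1 ≤ s ∧ s ≤ n ∧ (2 ≤ s → indiff c R (s - 1) ≤ x) ∧
      (s < n → x < indiff c R s) := by
  classical
  have hex : ∃ k, n ≤ k + 1 ∨ x < indiff c R (k + 1) := ⟨n, by omega⟩
  refine ⟨Nat.find hex + 1, by omega, ?_, fun hs ↦ ?_, fun hs ↦ ?_⟩
  · have := Nat.find_min' hex (m := n - 1) (Or.inl (by omega))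
    have := h.1
    omega
  · have := Nat.find_min hex (m := Nat.find hex - 1) (by omega)
    rw [not_or, not_lt] at this
    simpa [Nat.sub_add_cancel (show 1 ≤ Nat.find hex by omega)] using this.2
  · exact (Nat.find_spec hex).resolve_left (by omega)

end LinInstance

theorem sum_ite_lt_sub_eq (W : ℕ → ℝ) {s a n : ℕ} (han : a ≤ n) :
    ∑ i ∈ Ico s n, (if i < a then W (i + 1) - W i else 0) = W (max s a) - W s := by
  rw [← sum_filter, show {i ∈ Ico s n | i < a} = Ico s (max s a) by ext; simp; omega,
    sum_Ico_sub W (le_max_left _ _)]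

namespace DLC

variable {n : ℕ} {c R : ℕ → ℝ} {π : DLC}

noncomputable def welfare (c R : ℕ → ℝ) (π : DLC) : ℝ :=
  ∑ k ∈ Icc 1 π.K, π.τ k * (R (π.a k) - c (π.a k))

noncomputable def timeAbove (π : DLC) (i : ℕ) : ℝ :=
  ∑ k ∈ Icc 1 π.K with i < π.a k, π.τ k

theorem tsum_succ (π : DLC) (k : ℕ) : π.Tsum (k + 1) = π.Tsum k + π.τ (k + 1) :=
  sum_Icc_succ_top (by omega) _

theorem asum_succ (π : DLC) (k : ℕ) :
    π.Asum (k + 1) = π.Asum k + π.α (k + 1) * π.τ (k + 1) :=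
  sum_Icc_succ_top (by omega) _

theorem sum_mul_max_eq (W : ℕ → ℝ) (s : ℕ) (ha : ∀ k ∈ Icc 1 π.K, π.a k ≤ n) :
    ∑ k ∈ Icc 1 π.K, π.τ k * W (max s (π.a k)) =
      π.Tsum π.K * W s + ∑ i ∈ Ico s n, (W (i + 1) - W i) * π.timeAbove i := by
  simp only [timeAbove, Tsum, sum_filter, mul_sum, sum_mul]
  rw [sum_comm, ← sum_add_distrib]
  refine sum_congr rfl fun k hk ↦ ?_
  rw [eq_add_of_sub_eq' (sum_ite_lt_sub_eq W (ha k hk)).symm, mul_add, mul_sum]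
  simp only [mul_ite, mul_zero, zero_mul, mul_comm]

theorem welfare_eq {s : ℕ} (ha : ∀ k ∈ Icc 1 π.K, s ≤ π.a k ∧ π.a k ≤ n) :
    π.welfare c R = π.Tsum π.K * (R s - c s) +
      ∑ i ∈ Ico s n, ((R (i + 1) - c (i + 1)) - (R i - c i)) * π.timeAbove i := by
  rw [← sum_mul_max_eq (fun j ↦ R j - c j) s fun k hk ↦ (ha k hk).2, welfare]
  exact sum_congr rfl fun k hk ↦ by rw [max_eq_right (ha k hk).1]

namespace Valid

theorem tau_nonneg (hV : π.Valid n c R) {k : ℕ} (hk : k ∈ Icc 1 π.K) : 0 ≤ π.τ k :=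
  (hV.2.1 k hk).2.1.le

theorem tsum_pos (hV : π.Valid n c R) {k : ℕ} (hk : 1 ≤ k) (hkK : k ≤ π.K) :
    0 < π.Tsum k :=
  sum_pos (fun j hj ↦ (hV.2.1 j (Icc_subset_Icc_right hkK hj)).2.1)
    ⟨1, mem_Icc.2 ⟨le_rfl, hk⟩⟩

theorem asum_mono (hV : π.Valid n c R) {k l : ℕ} (hkl : k ≤ l) (hlK : l ≤ π.K) :
    π.Asum k ≤ π.Asum l :=
  sum_le_sum_of_subset_of_nonneg (Icc_subset_Icc_right hkl) fun j hj _ ↦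
    have hj := hV.2.1 j (Icc_subset_Icc_right hlK hj)
    mul_nonneg hj.1 hj.2.1.le

theorem asum_nonneg (hV : π.Valid n c R) : 0 ≤ π.Asum π.K := by
  simpa [Asum] using hV.asum_mono (Nat.zero_le _) le_rfl

theorem avg_mul_tsum (hV : π.Valid n c R) {k : ℕ} (hk : 1 ≤ k) (hkK : k ≤ π.K) :
    π.avg k * π.Tsum k = π.Asum k :=
  div_mul_cancel₀ _ (hV.tsum_pos hk hkK).ne'

theorem freeFall_of_asum_eq_zero (hV : π.Valid n c R) (hA : π.Asum π.K = 0) : π.FreeFall := by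
  intro k hk hkK
  have hkIcc : k ∈ Icc 1 π.K := mem_Icc.2 ⟨by omega, hkK⟩
  have hzero := (sum_eq_zero_iff_of_nonneg fun j hj ↦
    mul_nonneg (hV.2.1 j hj).1 (hV.2.1 j hj).2.1.le).1 hA k hkIcc
  exact (mul_eq_zero.1 hzero).resolve_right (hV.2.1 k hkIcc).2.1.ne'

/-- At each switch `a^k → a^{k+1}` both actions are best responses to `ᾱ^k`, so the identity
survives the switch. -/
theorem sum_agent_payoff (hV : π.Valid n c R) {k : ℕ} (hk : 1 ≤ k) (hkK : k ≤ π.K) :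
    ∑ j ∈ Icc 1 k, π.τ j * (π.α j * R (π.a j) - c (π.a j)) =
      π.Tsum k * (π.avg k * R (π.a k) - c (π.a k)) := by
  induction k, hk using Nat.le_induction with
  | base =>
    have hT : π.Tsum 1 = π.τ 1 := by simp [Tsum]
    have hA : π.Asum 1 = π.α 1 * π.τ 1 := by simp [Asum]
    rw [Icc_self, sum_singleton]
    linear_combination -R (π.a 1) * hV.avg_mul_tsum le_rfl hkK - R (π.a 1) * hA + c (π.a 1) * hT
  | succ k hk ih =>
    have hswitch := payoff_eq_of_mem_BR (hV.2.2.1 k (mem_Icc.2 ⟨hk, by omega⟩))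
      (hV.2.2.2 (k + 1) (by omega) hkK)
    rw [sum_Icc_succ_top (by omega), ih (by omega)]
    linear_combination π.Tsum k * hswitch - R (π.a (k + 1)) * hV.avg_mul_tsum (by omega) hkK
      - R (π.a (k + 1)) * π.asum_succ k + R (π.a (k + 1)) * hV.avg_mul_tsum hk (by omega)
      + c (π.a (k + 1)) * π.tsum_succ k

theorem util_mul_tsum (hV : π.Valid n c R) :
    π.Util R * π.Tsum π.K =
      π.welfare c R - π.Tsum π.K * (π.avg π.K * R (π.a π.K) - c (π.a π.K)) := by
  rw [Util, div_mul_cancel₀ _ (hV.tsum_pos hV.1 le_rfl).ne', welfare,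
    ← hV.sum_agent_payoff hV.1 le_rfl, ← sum_sub_distrib]
  exact sum_congr rfl fun _ _ ↦ by ring

/-- Both final actions are best responses to the same average `A / T`, so the agent is paid the
same in both contracts. -/
theorem util_le_util {π' : DLC} (hV : π.Valid n c R) (hV' : π'.Valid n c R)
    (hT : π'.Tsum π'.K = π.Tsum π.K) (hA : π'.Asum π'.K = π.Asum π.K)
    (hW : π.welfare c R ≤ π'.welfare c R) : π.Util R ≤ π'.Util R := by
  have havg : π'.avg π'.K = π.avg π.K := by rw [avg, avg, hT, hA]
  have hpay := payoff_eq_of_mem_BR (hV.2.2.1 π.K (mem_Icc.2 ⟨hV.1, le_rfl⟩))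
    (havg ▸ hV'.2.2.1 π'.K (mem_Icc.2 ⟨hV'.1, le_rfl⟩))
  have h := hV.util_mul_tsum
  have h' := hV'.util_mul_tsum
  rw [hT, havg, ← hpay] at h'
  exact le_of_mul_le_mul_right (by linarith) (hV.tsum_pos hV.1 le_rfl)

theorem welfare_le (hInst : LinInstance n c R) (hV : π.Valid n c R) {s : ℕ} (hs : 1 ≤ s)
    (hsn : s ≤ n) :
    π.welfare c R ≤ π.Tsum π.K * (R s - c s) +
      ∑ i ∈ Ico s n, ((R (i + 1) - c (i + 1)) - (R i - c i)) * π.timeAbove i := by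
  have ha k (hk : k ∈ Icc 1 π.K) := mem_Icc.1 (hV.2.1 k hk).2.2
  rw [← sum_mul_max_eq (fun j ↦ R j - c j) s fun k hk ↦ (ha k hk).2, welfare]
  refine sum_le_sum fun k hk ↦ mul_le_mul_of_nonneg_left ?_ (hV.tau_nonneg hk)
  have ha := ha k hk
  exact hInst.welfare_monotoneOn ha ⟨by omega, max_le hsn ha.2⟩ (le_max_right _ _)

/-- Whenever the agent plays above `i`, the average contract is at least `α_{i,i+1}`; at the
last such segment this caps the time spent above `i` by `A / α_{i,i+1}`. -/
theorem timeAbove_le (hInst : LinInstance n c R) (hV : π.Valid n c R) {i : ℕ} (hi : 1 ≤ i)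
    (hin : i < n) : π.timeAbove i ≤ π.Asum π.K / indiff c R i := by
  rw [le_div_iff₀ (hInst.indiff_pos hi hin)]
  rcases ({k ∈ Icc 1 π.K | i < π.a k}).eq_empty_or_nonempty with hF | hF
  · rw [timeAbove, hF, sum_empty, zero_mul]
    exact hV.asum_nonneg
  obtain ⟨hk0, hik0⟩ := mem_filter.1 (max'_mem _ hF)
  set k0 := max' _ hF
  obtain ⟨hk01, hk0K⟩ := mem_Icc.1 hk0
  have hsub : π.timeAbove i ≤ π.Tsum k0 :=
    sum_le_sum_of_subset_of_nonneg
      (fun k hk ↦ mem_Icc.2 ⟨(mem_Icc.1 (mem_filter.1 hk).1).1, le_max' _ k hk⟩)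
      fun k hk _ ↦ hV.tau_nonneg (Icc_subset_Icc_right hk0K hk)
  have havg := hInst.indiff_le_of_mem_BR (hV.2.2.1 k0 hk0) hi hik0
  calc π.timeAbove i * indiff c R i ≤ π.Tsum k0 * π.avg k0 :=
        mul_le_mul hsub havg (hInst.indiff_pos hi hin).le (hV.tsum_pos hk01 hk0K).le
    _ = π.Asum k0 := by rw [mul_comm, hV.avg_mul_tsum hk01 hk0K]
    _ ≤ π.Asum π.K := hV.asum_mono hk0K le_rfl

end Valid

end DLC

noncomputable def freeFallClock (c R : ℕ → ℝ) (n s : ℕ) (A T : ℝ) (k : ℕ) : ℝ :=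
  if k = 0 then 0 else if n - s + 1 ≤ k then T else A / indiff c R (n - k)

/-- The whole budget `A` is paid in the first segment and nothing afterwards, so the average
contract `A / t` decays; segment `k` plays action `n + 1 - k` and ends when the average reaches
`α_{n-k,n-k+1}`, where the agent is willing to step down, and the last segment plays `s`
until time `T`. -/
@[simps]
noncomputable def freeFallDLC (c R : ℕ → ℝ) (n s : ℕ) (A T : ℝ) : DLC where
  K := n - s + 1
  α k := if k = 1 then A / freeFallClock c R n s A T 1 else 0
  τ k := freeFallClock c R n s A T k - freeFallClock c R n s A T (k - 1)
  a k := n + 1 - k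

section FreeFall

variable {n s : ℕ} {c R : ℕ → ℝ} {A T : ℝ}

theorem freeFallDLC_freeFall : (freeFallDLC c R n s A T).FreeFall :=
  fun _ hk _ ↦ if_neg (by omega)

theorem tsum_freeFallDLC (k : ℕ) :
    (freeFallDLC c R n s A T).Tsum k = freeFallClock c R n s A T k := by
  induction k with
  | zero => simp [DLC.Tsum, freeFallClock]
  | succ k ih =>
    rw [DLC.tsum_succ, ih]
    simp [freeFallDLC]

theorem tsum_K_freeFallDLC :
    (freeFallDLC c R n s A T).Tsum (freeFallDLC c R n s A T).K = T := by
  rw [tsum_freeFallDLC]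
  exact (if_neg (by simp [freeFallDLC])).trans (if_pos le_rfl)

theorem freeFallClock_lt_succ (hInst : LinInstance n c R) (hA : 0 < A) (hT : 0 < T)
    (hs : 1 ≤ s) (hhi : s < n → A / T < indiff c R s) {k : ℕ} (hk : k < n - s + 1) :
    freeFallClock c R n s A T k < freeFallClock c R n s A T (k + 1) := by
  unfold freeFallClock
  rcases Nat.eq_zero_or_pos k with rfl | hk0
  · rw [if_pos rfl, if_neg (by omega)]
    split_ifs
    exacts [hT, div_pos hA (hInst.indiff_pos (by omega) (by omega))]
  rw [if_neg hk0.ne', if_neg (by omega), if_neg (by omega)]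
  split_ifs with hlast
  · rw [show n - k = s by omega, div_lt_iff₀ (hInst.indiff_pos hs (by omega))]
    rw [div_lt_iff₀ hT] at hhi
    linarith [hhi (by omega)]
  · rw [show n - k = n - (k + 1) + 1 by omega]
    exact div_lt_div_of_pos_left hA (hInst.indiff_pos (by omega) (by omega))
      (hInst.indiff_strictMonoOn ⟨by omega, by omega⟩ ⟨by omega, by omega⟩ (by omega))

theorem freeFallClock_one_pos (hInst : LinInstance n c R) (hA : 0 < A) (hT : 0 < T)
    (hs : 1 ≤ s) (hhi : s < n → A / T < indiff c R s) : 0 < freeFallClock c R n s A T 1 := by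
  simpa [freeFallClock] using freeFallClock_lt_succ hInst hA hT hs hhi (k := 0) (by omega)

theorem asum_freeFallDLC (hpos : 0 < freeFallClock c R n s A T 1) {k : ℕ} (hk : 1 ≤ k) :
    (freeFallDLC c R n s A T).Asum k = A := by
  rw [DLC.Asum, sum_eq_single_of_mem 1 (mem_Icc.2 ⟨le_rfl, hk⟩) fun j _ hj ↦ by
    simp [freeFallDLC, hj]]
  simp only [freeFallDLC, ↓reduceIte, Nat.sub_self]
  rw [show freeFallClock c R n s A T 0 = 0 from if_pos rfl, sub_zero, div_mul_cancel₀ _ hpos.ne']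

theorem avg_freeFallDLC (hA : 0 < A) (hpos : 0 < freeFallClock c R n s A T 1) {k : ℕ}
    (hk : 1 ≤ k) (hkK : k < n - s + 1) :
    (freeFallDLC c R n s A T).avg k = indiff c R (n - k) := by
  rw [DLC.avg, asum_freeFallDLC hpos hk, tsum_freeFallDLC, freeFallClock, if_neg (by omega),
    if_neg (by omega), div_div_cancel₀ hA.ne']

theorem avg_K_freeFallDLC (hpos : 0 < freeFallClock c R n s A T 1) :
    (freeFallDLC c R n s A T).avg (n - s + 1) = A / T := by
  rw [DLC.avg, asum_freeFallDLC hpos le_add_self]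
  exact congrArg (A / ·) tsum_K_freeFallDLC

theorem freeFallDLC_valid (hInst : LinInstance n c R) (hA : 0 < A) (hT : 0 < T) (hs : 1 ≤ s)
    (hsn : s ≤ n) (hlo : 2 ≤ s → indiff c R (s - 1) ≤ A / T)
    (hhi : s < n → A / T < indiff c R s) : (freeFallDLC c R n s A T).Valid n c R := by
  have hpos := freeFallClock_one_pos hInst hA hT hs hhi
  refine ⟨le_add_self, fun k hk ↦ ?_, fun k hk ↦ ?_, fun k hk hkK ↦ ?_⟩
  · simp only [freeFallDLC_K, freeFallDLC_α, freeFallDLC_τ, freeFallDLC_a, mem_Icc] at hk ⊢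
    refine ⟨?_, sub_pos.2 ?_, by omega, by omega⟩
    · split_ifs
      exacts [(div_pos hA hpos).le, le_rfl]
    · simpa [Nat.sub_add_cancel hk.1] using
        freeFallClock_lt_succ hInst hA hT hs hhi (k := k - 1) (by omega)
  · simp only [freeFallDLC_K, freeFallDLC_a, mem_Icc] at hk ⊢
    rcases hk.2.lt_or_eq with hkK | rfl
    · rw [avg_freeFallDLC hA hpos hk.1 hkK, show n + 1 - k = n - k + 1 by omega]
      exact hInst.succ_mem_BR_indiff (by omega) (by omega)
    · rw [avg_K_freeFallDLC hpos, show n + 1 - (n - s + 1) = s by omega]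
      exact hInst.mem_BR_of_indiff hs hsn hlo fun h ↦ (hhi h).le
  · simp only [freeFallDLC_K, freeFallDLC_a] at hkK ⊢
    rw [avg_freeFallDLC hA hpos (by omega) (by omega), show n + 1 - k = n - (k - 1) by omega]
    exact hInst.mem_BR_indiff (by omega) (by omega)

theorem timeAbove_freeFallDLC {i : ℕ} (hsi : s ≤ i) (hin : i < n) :
    (freeFallDLC c R n s A T).timeAbove i = A / indiff c R i := by
  have hfilter : {k ∈ Icc 1 (freeFallDLC c R n s A T).K | i < (freeFallDLC c R n s A T).a k} =
      Icc 1 (n - i) := by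
    ext k
    rw [mem_filter]
    simp only [freeFallDLC, mem_Icc]
    omega
  rw [DLC.timeAbove, hfilter, ← DLC.Tsum, tsum_freeFallDLC, freeFallClock, if_neg (by omega),
    if_neg (by omega), Nat.sub_sub_self hin.le]

theorem welfare_freeFallDLC (hsn : s ≤ n) :
    (freeFallDLC c R n s A T).welfare c R = T * (R s - c s) +
      ∑ i ∈ Ico s n, ((R (i + 1) - c (i + 1)) - (R i - c i)) * (A / indiff c R i) := by
  rw [DLC.welfare_eq (s := s) (n := n) fun k hk ↦ by
      simp only [freeFallDLC, mem_Icc] at hk ⊢; omega,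
    tsum_K_freeFallDLC]
  exact congrArg _ (sum_congr rfl fun i hi ↦ by
    rw [timeAbove_freeFallDLC (mem_Ico.1 hi).1 (mem_Ico.1 hi).2])

end FreeFall

/-- For every valid dynamic linear contract `π` there is a valid
free-fall dynamic linear contract `π'` with `Util(π') ≥ Util(π)`. -/
theorem free_fall_optimal_linear (n : ℕ) (c R : ℕ → ℝ) (hInst : LinInstance n c R)
    (π : DLC) (hπ : π.Valid n c R) :
    ∃ π' : DLC, π'.Valid n c R ∧ π'.FreeFall ∧ π'.Util R ≥ π.Util R := by
  rcases hπ.asum_nonneg.eq_or_lt with hA | hA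
  · exact ⟨π, hπ, hπ.freeFall_of_asum_eq_zero hA.symm, le_rfl⟩
  set A := π.Asum π.K
  set T := π.Tsum π.K
  have hT : 0 < T := hπ.tsum_pos hπ.1 le_rfl
  obtain ⟨s, hs, hsn, hlo, hhi⟩ := hInst.exists_top_mem_BR (A / T)
  have hV' := freeFallDLC_valid hInst hA hT hs hsn hlo hhi
  refine ⟨_, hV', freeFallDLC_freeFall, hπ.util_le_util hV' tsum_K_freeFallDLC
    (asum_freeFallDLC (freeFallClock_one_pos hInst hA hT hs hhi) hV'.1) ?_⟩
  calc π.welfare c R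
      ≤ T * (R s - c s) +
          ∑ i ∈ Ico s n, ((R (i + 1) - c (i + 1)) - (R i - c i)) * π.timeAbove i :=
        hπ.welfare_le hInst hs hsn
    _ ≤ T * (R s - c s) +
          ∑ i ∈ Ico s n, ((R (i + 1) - c (i + 1)) - (R i - c i)) * (A / indiff c R i) := by
        gcongr with i hi
        · obtain ⟨hsi, hin⟩ := mem_Ico.1 hi
          exact sub_nonneg.2 <|
            hInst.welfare_monotoneOn ⟨by omega, by omega⟩ ⟨by omega, hin⟩ (by omega)
        · exact hπ.timeAbove_le hInst (hs.trans (mem_Ico.1 hi).1) (mem_Ico.1 hi).2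
    _ = _ := (welfare_freeFallDLC hsn).symm
end

section
/- For every valid dynamic linear contract π there exists a valid dynamic linear contract π′ = ((α′^k, τ′^k, a′^k))_{k=1}^{K′} with Util(π′) ≥ Util(π) in which no two consecutive segments prescribe the same action, i.e., a′^k ≠ a′^{k+1} for all 1 ≤ k ≤ K′−1. -/
open Finset

/-!
Two consecutive segments prescribing the same action can be fused into one segment whose duration
is the sum of the two durations and whose scalar is their duration-weighted mean. The cumulative
duration and the cumulative payment then agree with the original ones at every surviving segment
boundary (the boundary between the fused segments just disappears), so every best-response
condition of the fused contract is one of the original contract, and the principal's total reward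
and total payment are unchanged. Fusing repeatedly lowers the number of segments each time and
ends in a contract without repeated actions.
-/

def mergeAt {β : Type*} (f : ℕ → β) (m : ℕ) (x : β) : ℕ → β :=
  fun k => if k < m then f k else if k = m then x else f (k + 1)

section MergeAt

variable {β : Type*} (f : ℕ → β) {m k : ℕ} (x : β)

@[simp] theorem mergeAt_of_lt (h : k < m) : mergeAt f m x k = f k := if_pos h

@[simp] theorem mergeAt_self : mergeAt f m x m = x := by simp [mergeAt]

@[simp] theorem mergeAt_of_gt (h : m < k) : mergeAt f m x k = f (k + 1) := by
  simp [mergeAt, h.not_gt, h.ne']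

end MergeAt

theorem sum_Icc_of_merged {M : Type*} [AddCommMonoid M] {g g' : ℕ → M} {m : ℕ} (hm : 1 ≤ m)
    (h_lt : ∀ j < m, g' j = g j) (h_eq : g' m = g m + g (m + 1))
    (h_gt : ∀ j, m < j → g' j = g (j + 1)) (k : ℕ) :
    ∑ j ∈ Icc 1 k, g' j = if k < m then ∑ j ∈ Icc 1 k, g j else ∑ j ∈ Icc 1 (k + 1), g j := by
  induction k with
  | zero => simp [show 0 < m by omega]
  | succ k ih =>
    rw [sum_Icc_succ_top (by omega), ih]
    rcases lt_trichotomy (k + 1) m with h | rfl | h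
    · rw [if_pos (by omega), if_pos h, h_lt _ h, sum_Icc_succ_top (by omega)]
    · rw [if_pos (by omega), if_neg (by omega), h_eq, sum_Icc_succ_top (by omega : 1 ≤ k + 2),
        sum_Icc_succ_top (by omega : 1 ≤ k + 1), ← add_assoc]
    · rw [if_neg (by omega), if_neg (by omega), h_gt _ h,
        sum_Icc_succ_top (by omega : 1 ≤ k + 2)]

namespace DLC

noncomputable def merge (π : DLC) (m : ℕ) : DLC where
  K := π.K - 1
  α := mergeAt π.α m ((π.α m * π.τ m + π.α (m + 1) * π.τ (m + 1)) / (π.τ m + π.τ (m + 1)))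
  τ := mergeAt π.τ m (π.τ m + π.τ (m + 1))
  a := mergeAt π.a m (π.a m)

variable {π : DLC} {m : ℕ}

theorem merge_Tsum (hm : 1 ≤ m) (k : ℕ) :
    (π.merge m).Tsum k = if k < m then π.Tsum k else π.Tsum (k + 1) :=
  sum_Icc_of_merged hm (fun _ hj => mergeAt_of_lt _ _ hj) (mergeAt_self _ _)
    (fun _ hj => mergeAt_of_gt _ _ hj) k

theorem merge_Asum (hm : 1 ≤ m) (hτ : π.τ m + π.τ (m + 1) ≠ 0) (k : ℕ) :
    (π.merge m).Asum k = if k < m then π.Asum k else π.Asum (k + 1) := by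
  refine sum_Icc_of_merged hm (fun j hj => by simp [merge, hj]) ?_
    (fun j hj => by simp [merge, hj]) k
  simp [merge, div_mul_cancel₀ _ hτ]

theorem merge_avg (hm : 1 ≤ m) (hτ : π.τ m + π.τ (m + 1) ≠ 0) (k : ℕ) :
    (π.merge m).avg k = if k < m then π.avg k else π.avg (k + 1) := by
  rw [avg, merge_Tsum hm, merge_Asum hm hτ]
  split_ifs <;> rfl

section Valid

variable {n : ℕ} {c R : ℕ → ℝ}

theorem Valid.tau_add_tau_succ_ne_zero (hπ : π.Valid n c R) (hm1 : 1 ≤ m) (hm2 : m < π.K) :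
    π.τ m + π.τ (m + 1) ≠ 0 :=
  (add_pos (hπ.2.1 m (mem_Icc.2 ⟨hm1, hm2.le⟩)).2.1
    (hπ.2.1 (m + 1) (mem_Icc.2 ⟨by omega, hm2⟩)).2.1).ne'

theorem Valid.merge (hπ : π.Valid n c R) (hm1 : 1 ≤ m) (hm2 : m < π.K)
    (ha : π.a m = π.a (m + 1)) : (π.merge m).Valid n c R := by
  have hτ := hπ.tau_add_tau_succ_ne_zero hm1 hm2
  obtain ⟨hK, hseg, hend, hstart⟩ := hπ
  have hK' : (π.merge m).K = π.K - 1 := rfl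
  refine ⟨by omega, fun k hk => ?_, fun k hk => ?_, fun k hk2 hkK => ?_⟩
  · rw [mem_Icc, hK'] at hk
    rcases lt_trichotomy k m with h | rfl | h
    · simpa [DLC.merge, h] using hseg k (mem_Icc.2 ⟨hk.1, by omega⟩)
    · obtain ⟨hα₁, hτ₁, ha₁⟩ := hseg k (mem_Icc.2 ⟨hk.1, by omega⟩)
      obtain ⟨hα₂, hτ₂, -⟩ := hseg (k + 1) (mem_Icc.2 ⟨by omega, by omega⟩)
      simp only [DLC.merge, mergeAt_self]
      exact ⟨by positivity, by positivity, ha₁⟩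
    · simpa [DLC.merge, h] using hseg (k + 1) (mem_Icc.2 ⟨by omega, by omega⟩)
  · rw [mem_Icc, hK'] at hk
    rw [merge_avg hm1 hτ]
    rcases lt_trichotomy k m with h | rfl | h
    · simpa [DLC.merge, h] using hend k (mem_Icc.2 ⟨hk.1, by omega⟩)
    · simpa [DLC.merge, ha] using hend (k + 1) (mem_Icc.2 ⟨by omega, by omega⟩)
    · simpa [DLC.merge, h, h.not_gt] using hend (k + 1) (mem_Icc.2 ⟨by omega, by omega⟩)
  · rw [hK'] at hkK
    rw [merge_avg hm1 hτ]
    rcases lt_trichotomy k m with h | rfl | h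
    · simpa [DLC.merge, h, show k - 1 < m by omega] using hstart k hk2 (by omega)
    · simpa [DLC.merge, show k - 1 < k by omega] using hstart k hk2 (by omega)
    · simpa [DLC.merge, h, show ¬k - 1 < m by omega, show k - 1 + 1 = k by omega]
        using hstart (k + 1) (by omega) (by omega)

theorem Valid.util_merge (hπ : π.Valid n c R) (hm1 : 1 ≤ m) (hm2 : m < π.K)
    (ha : π.a m = π.a (m + 1)) : (π.merge m).Util R = π.Util R := by
  have hτ := hπ.tau_add_tau_succ_ne_zero hm1 hm2
  have hK : (π.merge m).K + 1 = π.K := by simp only [DLC.merge]; omega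
  have hlast : ¬(π.merge m).K < m := by simp only [DLC.merge]; omega
  have hreward := sum_Icc_of_merged (g := fun j => π.τ j * (1 - π.α j) * R (π.a j))
    (g' := fun j => (π.merge m).τ j * (1 - (π.merge m).α j) * R ((π.merge m).a j)) hm1
    (fun j hj => by simp [DLC.merge, hj]) (by simp [DLC.merge, ← ha]; field_simp; ring)
    (fun j hj => by simp [DLC.merge, hj]) (π.merge m).K
  rw [Util, Util, hreward, merge_Tsum hm1, if_neg hlast, if_neg hlast, hK]

end Valid

end DLC

theorem no_repeat_rewriting_general (n : ℕ) (c R : ℕ → ℝ)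
    (π : DLC) (hπ : π.Valid n c R) :
    ∃ π' : DLC, π'.Valid n c R ∧
      (∀ k, 1 ≤ k → k < π'.K → π'.a k ≠ π'.a (k + 1)) ∧
      π'.Util R ≥ π.Util R := by
  induction hK : π.K using Nat.strong_induction_on generalizing π with
  | _ K ih =>
    by_cases hrep : ∀ k, 1 ≤ k → k < π.K → π.a k ≠ π.a (k + 1)
    · exact ⟨π, hπ, hrep, le_rfl⟩
    · push Not at hrep
      obtain ⟨m, hm1, hm2, ha⟩ := hrep
      obtain ⟨π', hvalid, hnorep, hutil⟩ :=
        ih (π.K - 1) (by omega) (π.merge m) (hπ.merge hm1 hm2 ha) rfl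
      exact ⟨π', hvalid, hnorep, (hπ.util_merge hm1 hm2 ha).ge.trans hutil⟩

/-- Every valid dynamic linear contract can be rewritten,
without losing principal utility, so that no two consecutive segments
prescribe the same action. -/
theorem no_repeat_rewriting (n : ℕ) (c R : ℕ → ℝ) (hInst : LinInstance n c R)
    (π : DLC) (hπ : π.Valid n c R) :
    ∃ π' : DLC, π'.Valid n c R ∧
      (∀ k, 1 ≤ k → k < π'.K → π'.a k ≠ π'.a (k + 1)) ∧
      π'.Util R ≥ π.Util R :=
  no_repeat_rewriting_general n c R π hπ
end

section
/- For every valid p-scaled dynamic contract π there exists a valid free-fall p-scaled dynamic contract π′ with Util(π′) ≥ Util(π). (Free-fall contracts are optimal among p-scaled dynamic contracts.) -/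
open Finset

/-- Expected reward `R_i = Σ_j F_{ij} r_j` of action `i`. -/
noncomputable def expRew (m : ℕ) (F : ℕ → ℕ → ℝ) (r : ℕ → ℝ) (i : ℕ) : ℝ :=
  ∑ j ∈ Finset.Icc 1 m, F i j * r j

/-- Expected payment `P_i = Σ_j F_{ij} p_j` of action `i` under base contract `p`. -/
noncomputable def expPay (m : ℕ) (F : ℕ → ℕ → ℝ) (p : ℕ → ℝ) (i : ℕ) : ℝ :=
  ∑ j ∈ Finset.Icc 1 m, F i j * p j

/-- Basic assumptions of a principal-agent instance with base contract `p`. -/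
def PInstance (n m : ℕ) (c : ℕ → ℝ) (F : ℕ → ℕ → ℝ) (r : ℕ → ℝ) (p : ℕ → ℝ) : Prop :=
  2 ≤ n ∧ (∀ i ∈ Finset.Icc 1 n, 0 ≤ c i) ∧ (∀ j ∈ Finset.Icc 1 m, 0 ≤ r j) ∧
    (∀ i ∈ Finset.Icc 1 n,
      (∀ j ∈ Finset.Icc 1 m, 0 ≤ F i j) ∧ ∑ j ∈ Finset.Icc 1 m, F i j = 1) ∧
    (∀ j ∈ Finset.Icc 1 m, 0 ≤ p j)

/-- Best-response set `BR_p(x)` of the agent to the scaled contract `x·p`. -/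
def BRp (n m : ℕ) (c : ℕ → ℝ) (F : ℕ → ℕ → ℝ) (p : ℕ → ℝ) (x : ℝ) : Set ℕ :=
  {i | i ∈ Finset.Icc 1 n ∧ ∀ j ∈ Finset.Icc 1 n,
    x * expPay m F p j - c j ≤ x * expPay m F p i - c i}

/-- `β` records the breakpoints of `p`-scaled contracts: `β 0 = α_{0,1} = 0`,
`β i = α_{i,i+1}` (for `1 ≤ i ≤ n-1`), they are strictly increasing, and for
`α ≥ 0` action `i` is a best response iff `α_{i-1,i} ≤ α ≤ α_{i,i+1}`
(with `α_{n,n+1} = +∞`). -/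
def Breakpoints (n m : ℕ) (c : ℕ → ℝ) (F : ℕ → ℕ → ℝ) (p : ℕ → ℝ) (β : ℕ → ℝ) : Prop :=
  β 0 = 0 ∧ (∀ i, i + 1 ≤ n - 1 → β i < β (i + 1)) ∧ (0 < β 1) ∧
    (∀ x : ℝ, 0 ≤ x → ∀ i, 1 ≤ i → i ≤ n →
      (i ∈ BRp n m c F p x ↔ (β (i - 1) ≤ x ∧ (i < n → x ≤ β i))))

/-- A `p`-scaled dynamic contract with `K` segments (indexed `1,…,K`):
scalars `α`, durations `τ`, and actions `a`. -/
structure DSC where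
  K : ℕ
  α : ℕ → ℝ
  τ : ℕ → ℝ
  a : ℕ → ℕ

namespace DSC

/-- Total duration of the first `k` segments. -/
noncomputable def Tsum (π : DSC) (k : ℕ) : ℝ := ∑ j ∈ Finset.Icc 1 k, π.τ j

/-- Time-averaged scalar `ᾱ^k` after the first `k` segments. -/
noncomputable def avg (π : DSC) (k : ℕ) : ℝ :=
  (∑ j ∈ Finset.Icc 1 k, π.α j * π.τ j) / π.Tsum k

/-- Validity of a `p`-scaled dynamic contract. -/
def Valid (n m : ℕ) (c : ℕ → ℝ) (F : ℕ → ℕ → ℝ) (p : ℕ → ℝ) (π : DSC) : Prop :=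
  1 ≤ π.K ∧
    (∀ k ∈ Finset.Icc 1 π.K, 0 ≤ π.α k ∧ 0 < π.τ k ∧ π.a k ∈ Finset.Icc 1 n) ∧
    (∀ k ∈ Finset.Icc 1 π.K, π.a k ∈ BRp n m c F p (π.avg k)) ∧
    (∀ k, 2 ≤ k → k ≤ π.K → π.a k ∈ BRp n m c F p (π.avg (k - 1)))

/-- Time-averaged principal utility. -/
noncomputable def Util (m : ℕ) (F : ℕ → ℕ → ℝ) (r : ℕ → ℝ) (p : ℕ → ℝ) (π : DSC) : ℝ :=
  (∑ k ∈ Finset.Icc 1 π.K,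
    π.τ k * (expRew m F r (π.a k) - π.α k * expPay m F p (π.a k))) / π.Tsum π.K

/-- Free-fall: the zero contract is offered on every segment after the first. -/
def FreeFall (π : DSC) : Prop := ∀ k, 2 ≤ k → k ≤ π.K → π.α k = 0

end DSC

/-!
Along a valid contract the agent always plays a best response to the running average `ᾱ`, so for
any per-action affine family `x ↦ e i + s i * x` that is continuous where the best response
changes, `Σ τₖ (e (aₖ) + s (aₖ) αₖ)` telescopes to `T · (e f + s f ᾱ)`, with `f` the final
action. The agent's utilities form such a family, and so does `W i - S i * x`, where `W = R - c`
is the welfare and the welfare potential `S` is chosen to make it continuous. For a free fall,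
which pays only at the start, this computes the utility of the fall from the region of action `h`
down to the breakpoint `β (j - 1)` as `R j - β (j - 1) (P j + S j - S h)`.

Let `B` be the largest of these values. A piecewise affine `ψ`, nondecreasing, below the agent's
utility `u`, whose piece on the region of action `i` has intercept at least `W i - B`, is a dual
certificate: telescoping `ψ - u` bounds the principal's utility of every valid contract by `B`.
We take `ψ` to interpolate values at the breakpoints defined by backward recursion, which makes it
monotone with the right intercepts by construction; unfolding the recursion bounds each breakpoint
value by a free-fall value, and hence puts `ψ` below `u`.
-/

section BestResponse

variable {n m : ℕ} {c : ℕ → ℝ} {F : ℕ → ℕ → ℝ} {r p β : ℕ → ℝ}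

theorem PInstance.expPay_nonneg (hInst : PInstance n m c F r p) {i : ℕ}
    (hi : i ∈ Finset.Icc 1 n) : 0 ≤ expPay m F p i :=
  Finset.sum_nonneg fun j hj => mul_nonneg ((hInst.2.2.2.1 i hi).1 j hj) (hInst.2.2.2.2 j hj)

theorem mem_Icc_of_mem_BRp {x : ℝ} {i : ℕ} (hi : i ∈ BRp n m c F p x) : i ∈ Finset.Icc 1 n :=
  hi.1

theorem agentUtil_le_of_mem_BRp {x : ℝ} {i j : ℕ} (hi : i ∈ BRp n m c F p x)
    (hj : j ∈ Finset.Icc 1 n) : x * expPay m F p j - c j ≤ x * expPay m F p i - c i :=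
  hi.2 j hj

namespace Breakpoints

variable (hβ : Breakpoints n m c F p β)
include hβ

theorem strictMonoOn : StrictMonoOn β (Set.Iio n) := by
  have h : StrictMonoOn β (Set.Iic (n - 1)) :=
    strictMonoOn_Iic_of_lt_succ fun i hi => hβ.2.1 i (Order.succ_le_of_lt hi)
  exact h.mono fun i (hi : i < n) => (Nat.le_sub_one_iff_lt (by omega)).2 hi

theorem le_of_le {i j : ℕ} (hij : i ≤ j) (hj : j < n) : β i ≤ β j :=
  hβ.strictMonoOn.monotoneOn (lt_of_le_of_lt hij hj) hj hij

theorem pos {j : ℕ} (h1 : 1 ≤ j) (hj : j < n) : 0 < β j :=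
  hβ.1 ▸ hβ.strictMonoOn (lt_of_le_of_lt (Nat.zero_le j) hj) hj h1

theorem nonneg {j : ℕ} (hj : j < n) : 0 ≤ β j :=
  hβ.1 ▸ hβ.le_of_le (Nat.zero_le j) hj

theorem nonneg_and_lt_succ : ∀ j, j + 1 < n → 0 ≤ β j ∧ β j < β (j + 1) :=
  fun j hj => ⟨hβ.nonneg (by omega), hβ.strictMonoOn (by simp; omega) hj (Nat.lt_succ_self j)⟩

theorem mem_BRp_iff {x : ℝ} (hx : 0 ≤ x) {i : ℕ} (h1 : 1 ≤ i) (hn : i ≤ n) :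
    i ∈ BRp n m c F p x ↔ β (i - 1) ≤ x ∧ (i < n → x ≤ β i) :=
  hβ.2.2.2 x hx i h1 hn

theorem mem_BRp_self {i : ℕ} (h1 : 1 ≤ i) (hn : i < n) : i ∈ BRp n m c F p (β i) :=
  (hβ.mem_BRp_iff (hβ.nonneg hn) h1 hn.le).2 ⟨hβ.le_of_le (Nat.sub_le i 1) hn, fun _ => le_rfl⟩

theorem succ_mem_BRp {i : ℕ} (hn : i < n) : i + 1 ∈ BRp n m c F p (β i) :=
  (hβ.mem_BRp_iff (hβ.nonneg hn) (Nat.le_add_left 1 i) hn).2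
    ⟨le_rfl, fun h => (hβ.strictMonoOn hn h (Nat.lt_succ_self i)).le⟩

theorem exists_gt_mem_BRp {i : ℕ} (h1 : 1 ≤ i) (hn : i ≤ n) :
    ∃ x, β (i - 1) < x ∧ i ∈ BRp n m c F p x := by
  rcases hn.lt_or_eq with hn | rfl
  · exact ⟨β i, hβ.strictMonoOn (show i - 1 < n by omega) hn (by omega), hβ.mem_BRp_self h1 hn⟩
  · have h0 := hβ.nonneg (show i - 1 < i by omega)
    refine ⟨β (i - 1) + 1, by linarith, (hβ.mem_BRp_iff (by linarith) h1 le_rfl).2 ?_⟩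
    exact ⟨by linarith, fun h => absurd h (lt_irrefl i)⟩

theorem eq_succ_of_mem_BRp {x : ℝ} (hx : 0 ≤ x) {i j : ℕ} (hi : i ∈ BRp n m c F p x)
    (hj : j ∈ BRp n m c F p x) (hij : i < j) : j = i + 1 ∧ x = β i := by
  obtain ⟨hi1, hin⟩ := Finset.mem_Icc.1 (mem_Icc_of_mem_BRp hi)
  obtain ⟨hj1, hjn⟩ := Finset.mem_Icc.1 (mem_Icc_of_mem_BRp hj)
  have hxi : x ≤ β i := ((hβ.mem_BRp_iff hx hi1 hin).1 hi).2 (by omega)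
  have hxj : β (j - 1) ≤ x := ((hβ.mem_BRp_iff hx hj1 hjn).1 hj).1
  have hji : j = i + 1 := by
    by_contra hne
    have := hβ.strictMonoOn (show i < n by omega) (show j - 1 < n by omega)
      (show i < j - 1 by omega)
    linarith
  subst hji
  exact ⟨rfl, le_antisymm hxi hxj⟩

end Breakpoints

def AgreeOnBRp (n m : ℕ) (c : ℕ → ℝ) (F : ℕ → ℕ → ℝ) (p e s : ℕ → ℝ) : Prop :=
  ∀ x, 0 ≤ x → ∀ i ∈ BRp n m c F p x, ∀ j ∈ BRp n m c F p x, e i + s i * x = e j + s j * x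

theorem AgreeOnBRp.sub {e s e' s' : ℕ → ℝ} (h : AgreeOnBRp n m c F p e s)
    (h' : AgreeOnBRp n m c F p e' s') :
    AgreeOnBRp n m c F p (fun i => e i - e' i) (fun i => s i - s' i) := by
  intro x hx i hi j hj
  linear_combination h x hx i hi j hj - h' x hx i hi j hj

theorem agreeOnBRp_agentUtil : AgreeOnBRp n m c F p (fun i => -c i) (expPay m F p) := by
  intro x _ i hi j hj
  linarith [agentUtil_le_of_mem_BRp hi (mem_Icc_of_mem_BRp hj),
    agentUtil_le_of_mem_BRp hj (mem_Icc_of_mem_BRp hi)]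

theorem Breakpoints.agreeOnBRp {e s : ℕ → ℝ} (hβ : Breakpoints n m c F p β)
    (h : ∀ l, 1 ≤ l → l < n → e l + s l * β l = e (l + 1) + s (l + 1) * β l) :
    AgreeOnBRp n m c F p e s := by
  have key : ∀ x, 0 ≤ x → ∀ i ∈ BRp n m c F p x, ∀ j ∈ BRp n m c F p x, i < j →
      e i + s i * x = e j + s j * x := by
    intro x hx i hi j hj hij
    obtain ⟨rfl, rfl⟩ := hβ.eq_succ_of_mem_BRp hx hi hj hij
    have := Finset.mem_Icc.1 (mem_Icc_of_mem_BRp hj)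
    exact h i (Finset.mem_Icc.1 (mem_Icc_of_mem_BRp hi)).1 (by omega)
  intro x hx i hi j hj
  rcases lt_trichotomy i j with hij | rfl | hij
  · exact key x hx i hi j hj hij
  · rfl
  · exact (key x hx j hj i hi hij).symm

end BestResponse

noncomputable def welfare (m : ℕ) (c : ℕ → ℝ) (F : ℕ → ℕ → ℝ) (r : ℕ → ℝ) (i : ℕ) : ℝ :=
  expRew m F r i - c i

namespace DSC

variable {n m : ℕ} {c : ℕ → ℝ} {F : ℕ → ℕ → ℝ} {r p : ℕ → ℝ} {π : DSC}

theorem Tsum_succ (π : DSC) (k : ℕ) : π.Tsum (k + 1) = π.Tsum k + π.τ (k + 1) :=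
  Finset.sum_Icc_succ_top (Nat.le_add_left 1 k) _

theorem Valid.tau_pos (hπ : π.Valid n m c F p) {k : ℕ} (hk : k ∈ Finset.Icc 1 π.K) :
    0 < π.τ k :=
  (hπ.2.1 k hk).2.1

theorem Valid.alpha_nonneg (hπ : π.Valid n m c F p) {k : ℕ} (hk : k ∈ Finset.Icc 1 π.K) :
    0 ≤ π.α k :=
  (hπ.2.1 k hk).1

theorem Valid.Tsum_pos (hπ : π.Valid n m c F p) {k : ℕ} (h1 : 1 ≤ k) (hK : k ≤ π.K) :
    0 < π.Tsum k :=
  Finset.sum_pos (fun _ hj => hπ.tau_pos (Finset.Icc_subset_Icc_right hK hj))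
    ⟨1, Finset.mem_Icc.2 ⟨le_rfl, h1⟩⟩

theorem Valid.avg_nonneg (hπ : π.Valid n m c F p) {k : ℕ} (hK : k ≤ π.K) : 0 ≤ π.avg k := by
  have hsub := Finset.Icc_subset_Icc_right (a := 1) hK
  exact div_nonneg
    (Finset.sum_nonneg fun j hj => mul_nonneg (hπ.alpha_nonneg (hsub hj)) (hπ.tau_pos (hsub hj)).le)
    (Finset.sum_nonneg fun j hj => (hπ.tau_pos (hsub hj)).le)

theorem Valid.Tsum_mul_avg (hπ : π.Valid n m c F p) {k : ℕ} (h1 : 1 ≤ k) (hK : k ≤ π.K) :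
    π.Tsum k * π.avg k = ∑ j ∈ Finset.Icc 1 k, π.α j * π.τ j :=
  mul_div_cancel₀ _ (hπ.Tsum_pos h1 hK).ne'

theorem Valid.sum_affine_eq (hπ : π.Valid n m c F p) {e s : ℕ → ℝ}
    (hes : AgreeOnBRp n m c F p e s) :
    ∑ k ∈ Finset.Icc 1 π.K, π.τ k * (e (π.a k) + s (π.a k) * π.α k) =
      π.Tsum π.K * (e (π.a π.K) + s (π.a π.K) * π.avg π.K) := by
  have partial_sum : ∀ k ≤ π.K, ∑ t ∈ Finset.Icc 1 k, π.τ t * (e (π.a t) + s (π.a t) * π.α t) =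
      π.Tsum k * e (π.a k) + s (π.a k) * ∑ t ∈ Finset.Icc 1 k, π.α t * π.τ t := by
    intro k hk
    induction k with
    | zero => simp [DSC.Tsum]
    | succ k ih =>
      have junction : π.Tsum k * e (π.a k) + s (π.a k) * ∑ t ∈ Finset.Icc 1 k, π.α t * π.τ t =
          π.Tsum k * e (π.a (k + 1)) + s (π.a (k + 1)) * ∑ t ∈ Finset.Icc 1 k, π.α t * π.τ t := by
        rcases Nat.eq_zero_or_pos k with rfl | h1
        · simp [DSC.Tsum]
        have hagree := hes _ (hπ.avg_nonneg (by omega)) _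
          (hπ.2.2.1 k (Finset.mem_Icc.2 ⟨h1, by omega⟩)) _ (hπ.2.2.2 (k + 1) (by omega) hk)
        rw [← hπ.Tsum_mul_avg h1 (by omega)]
        linear_combination π.Tsum k * hagree
      rw [Finset.sum_Icc_succ_top (by omega), ih (by omega), Tsum_succ,
        Finset.sum_Icc_succ_top (by omega)]
      linear_combination junction
  rw [partial_sum π.K le_rfl, ← hπ.Tsum_mul_avg hπ.1 le_rfl]
  ring

end DSC

/-- The pieces `x ↦ d i + C i * x` certify that no valid contract earns the principal more
than `B`. -/
structure IsDualCertificate (n m : ℕ) (c : ℕ → ℝ) (F : ℕ → ℕ → ℝ) (r p : ℕ → ℝ) (B : ℝ)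
    (d C : ℕ → ℝ) : Prop where
  slope_nonneg : ∀ i ∈ Finset.Icc 1 n, 0 ≤ C i
  welfare_sub_le : ∀ i ∈ Finset.Icc 1 n, welfare m c F r i - B ≤ d i
  agree : AgreeOnBRp n m c F p d C
  le_agentUtil : ∀ x, 0 ≤ x → ∀ i ∈ BRp n m c F p x, d i + C i * x ≤ x * expPay m F p i - c i

theorem DSC.Valid.Util_le {n m : ℕ} {c : ℕ → ℝ} {F : ℕ → ℕ → ℝ} {r p : ℕ → ℝ} {π : DSC}
    {B : ℝ} {d C : ℕ → ℝ} (hπ : π.Valid n m c F p) (hcert : IsDualCertificate n m c F r p B d C) :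
    π.Util m F r p ≤ B := by
  set P := expPay m F p
  set f := π.a π.K
  have hT := hπ.Tsum_pos hπ.1 le_rfl
  have hf := hπ.2.2.1 π.K (Finset.mem_Icc.2 ⟨hπ.1, le_rfl⟩)
  have hfinal := hcert.le_agentUtil _ (hπ.avg_nonneg le_rfl) f hf
  have htele := hπ.sum_affine_eq (hcert.agree.sub agreeOnBRp_agentUtil)
  have hterm : ∀ k ∈ Finset.Icc 1 π.K, π.τ k * (expRew m F r (π.a k) - π.α k * P (π.a k)) ≤
      B * π.τ k + π.τ k * ((d (π.a k) - -c (π.a k)) + (C (π.a k) - P (π.a k)) * π.α k) := by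
    intro k hk
    have ha := (hπ.2.1 k hk).2.2
    have hW := hcert.welfare_sub_le _ ha
    have hCα := mul_nonneg (hcert.slope_nonneg _ ha) (hπ.alpha_nonneg hk)
    have hτ := hπ.tau_pos hk
    unfold welfare at hW
    nlinarith
  rw [DSC.Util, div_le_iff₀ hT]
  calc _ ≤ ∑ k ∈ Finset.Icc 1 π.K,
        (B * π.τ k + π.τ k * ((d (π.a k) - -c (π.a k)) + (C (π.a k) - P (π.a k)) * π.α k)) :=
        Finset.sum_le_sum hterm
    _ = B * π.Tsum π.K + π.Tsum π.K * ((d f - -c f) + (C f - P f) * π.avg π.K) := by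
        rw [Finset.sum_add_distrib, ← Finset.mul_sum, htele, DSC.Tsum]
    _ ≤ B * π.Tsum π.K := by nlinarith

section BreakpointValue

variable (n : ℕ) (W β : ℕ → ℝ)

/-- The actions whose region starts at or below the breakpoint `β j` are `1, …, j + 1`. -/
noncomputable def maxWelfareBelow (j : ℕ) : ℝ :=
  (Finset.Icc 1 (j + 1)).sup' (Finset.nonempty_Icc.2 (Nat.le_add_left 1 j)) W

/-- `W i - welfarePotential W β i * x` is continuous across every breakpoint `x = β i`. -/
noncomputable def welfarePotential (j : ℕ) : ℝ :=
  ∑ l ∈ Finset.Ico 1 j, (W (l + 1) - W l) / β l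

/-- The time-average of `W` over a free fall that starts in the region of action `h` and ends at
the breakpoint `β j`. -/
noncomputable def fallValue (j h : ℕ) : ℝ :=
  W (j + 1) + β j * (welfarePotential W β h - welfarePotential W β (j + 1))

/-- The value at `β j` of the dual certificate for the bound `B`, plus `B`. -/
noncomputable def breakpointValue (j : ℕ) : ℝ :=
  if j + 1 < n then
    max (maxWelfareBelow W j)
      (W (j + 1) + β j / β (j + 1) * (breakpointValue (j + 1) - W (j + 1)))
  else maxWelfareBelow W j
termination_by n - j

/-- The values of staying in an action `l ≤ j + 1` and jumping up to `β j` at the end, and of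
the free falls ending at `β j`. -/
def breakpointBounds (j : ℕ) : Set ℝ :=
  W '' Set.Icc 1 (j + 1) ∪ fallValue W β j '' Set.Icc (j + 1) n

noncomputable def dualSlope (j : ℕ) : ℝ :=
  if j < n then (breakpointValue n W β j - breakpointValue n W β (j - 1)) / (β j - β (j - 1))
  else 0

noncomputable def dualIntercept (j : ℕ) : ℝ :=
  breakpointValue n W β (j - 1) - dualSlope n W β j * β (j - 1)

variable {n W β}

theorem welfarePotential_succ {j : ℕ} (hj : 1 ≤ j) :
    welfarePotential W β (j + 1) = welfarePotential W β j + (W (j + 1) - W j) / β j :=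
  Finset.sum_Ico_succ_top hj _

theorem mul_welfarePotential_succ_sub {j : ℕ} (hj : 1 ≤ j) (hβj : β j ≠ 0) :
    β j * (welfarePotential W β (j + 1) - welfarePotential W β j) = W (j + 1) - W j := by
  rw [welfarePotential_succ hj]
  field_simp
  ring

theorem fallValue_succ_self (j : ℕ) : fallValue W β j (j + 1) = W (j + 1) := by
  simp [fallValue]

theorem chord_fallValue {j : ℕ} (h : ℕ) (hβ : β (j + 1) ≠ 0) :
    W (j + 1) + β j / β (j + 1) * (fallValue W β (j + 1) h - W (j + 1)) = fallValue W β j h := by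
  have hS := mul_welfarePotential_succ_sub (W := W) (Nat.le_add_left 1 j) hβ
  simp only [fallValue]
  field_simp
  linear_combination -β j * hS

theorem le_maxWelfareBelow {j l : ℕ} (hl : l ∈ Finset.Icc 1 (j + 1)) :
    W l ≤ maxWelfareBelow W j :=
  Finset.le_sup' W hl

theorem maxWelfareBelow_le_succ (j : ℕ) : maxWelfareBelow W j ≤ maxWelfareBelow W (j + 1) :=
  Finset.sup'_mono W (Finset.Icc_subset_Icc_right (Nat.le_succ _)) _

theorem exists_eq_maxWelfareBelow (j : ℕ) :
    ∃ l ∈ Finset.Icc 1 (j + 1), maxWelfareBelow W j = W l :=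
  Finset.exists_mem_eq_sup' _ W

theorem breakpointValue_of_lt {j : ℕ} (hj : j + 1 < n) :
    breakpointValue n W β j = max (maxWelfareBelow W j)
      (W (j + 1) + β j / β (j + 1) * (breakpointValue n W β (j + 1) - W (j + 1))) := by
  rw [breakpointValue, if_pos hj]

theorem breakpointValue_of_le {j : ℕ} (hj : n ≤ j + 1) :
    breakpointValue n W β j = maxWelfareBelow W j := by
  rw [breakpointValue, if_neg (by omega)]

theorem maxWelfareBelow_le_breakpointValue (j : ℕ) :
    maxWelfareBelow W j ≤ breakpointValue n W β j := by
  rcases lt_or_ge (j + 1) n with hj | hj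
  · exact (breakpointValue_of_lt hj).symm ▸ le_max_left _ _
  · exact (breakpointValue_of_le hj).ge

theorem dualIntercept_add_dualSlope_mul (j : ℕ) :
    dualIntercept n W β j + dualSlope n W β j * β (j - 1) = breakpointValue n W β (j - 1) := by
  rw [dualIntercept]
  ring

variable (hβ : ∀ j, j + 1 < n → 0 ≤ β j ∧ β j < β (j + 1))
include hβ

theorem div_succ_mem_Icc {j : ℕ} (hj : j + 1 < n) : β j / β (j + 1) ∈ Set.Icc 0 1 := by
  obtain ⟨h0, hlt⟩ := hβ j hj
  exact ⟨div_nonneg h0 (by linarith), (div_le_one (by linarith)).2 hlt.le⟩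

theorem breakpointValue_le_succ {j : ℕ} (hj : j + 1 < n) :
    breakpointValue n W β j ≤ breakpointValue n W β (j + 1) := by
  have hV := maxWelfareBelow_le_breakpointValue (n := n) (W := W) (β := β) (j + 1)
  have hΛ := maxWelfareBelow_le_succ (W := W) j
  have hW := le_maxWelfareBelow (W := W) (j := j + 1) (l := j + 1) (by simp)
  obtain ⟨hθ0, hθ1⟩ := div_succ_mem_Icc hβ hj
  rw [breakpointValue_of_lt hj]
  refine max_le (hΛ.trans hV) ?_
  nlinarith

theorem mul_breakpointValue_succ_le {j : ℕ} (hj : j + 1 < n) :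
    β j * (breakpointValue n W β (j + 1) - W (j + 1)) ≤
      β (j + 1) * (breakpointValue n W β j - W (j + 1)) := by
  have hpos : 0 < β (j + 1) := by linarith [hβ j hj]
  have hchord := (breakpointValue_of_lt (W := W) hj).symm ▸ le_max_right (maxWelfareBelow W j)
    (W (j + 1) + β j / β (j + 1) * (breakpointValue n W β (j + 1) - W (j + 1)))
  have hscale : β j * (breakpointValue n W β (j + 1) - W (j + 1)) =
      β (j + 1) * (β j / β (j + 1) * (breakpointValue n W β (j + 1) - W (j + 1))) := by
    field_simp
  rw [hscale]
  exact mul_le_mul_of_nonneg_left (by linarith) hpos.le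

theorem exists_ge_breakpointValue (j : ℕ) :
    ∃ b ∈ breakpointBounds n W β j, breakpointValue n W β j ≤ b := by
  have hΛ : maxWelfareBelow W j ∈ breakpointBounds n W β j := by
    obtain ⟨l, hl, hΛ⟩ := exists_eq_maxWelfareBelow (W := W) j
    exact Or.inl ⟨l, by simpa using hl, hΛ.symm⟩
  rcases lt_or_ge (j + 1) n with hj1 | hj1
  swap
  · exact ⟨_, hΛ, (breakpointValue_of_le hj1).le⟩
  obtain ⟨b, hb, hVb⟩ := exists_ge_breakpointValue (j + 1)
  obtain ⟨hθ0, hθ1⟩ := div_succ_mem_Icc hβ hj1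
  have hne : β (j + 1) ≠ 0 := by linarith [hβ j hj1]
  have hchord : ∃ b' ∈ breakpointBounds n W β j,
      W (j + 1) + β j / β (j + 1) * (b - W (j + 1)) ≤ b' := by
    rcases hb with ⟨l, hl, rfl⟩ | ⟨h, hh, rfl⟩
    · rcases hl.2.lt_or_eq with hlt | rfl
      · refine ⟨max (W (j + 1)) (W l), max_rec' _ (Or.inl ⟨j + 1, by simp, rfl⟩)
          (Or.inl ⟨l, ⟨hl.1, by omega⟩, rfl⟩), ?_⟩
        rcases le_total (W l) (W (j + 1)) with hle | hle
        · nlinarith [le_max_left (W (j + 1)) (W l)]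
        · nlinarith [le_max_right (W (j + 1)) (W l)]
      · refine ⟨fallValue W β j (j + 1 + 1), Or.inr ⟨j + 1 + 1, ⟨by omega, by omega⟩, rfl⟩, ?_⟩
        rw [← fallValue_succ_self (W := W) (β := β) (j + 1), chord_fallValue _ hne]
    · exact ⟨fallValue W β j h, Or.inr ⟨h, ⟨by linarith [hh.1], hh.2⟩, rfl⟩,
        (chord_fallValue h hne).le⟩
  obtain ⟨b', hb', hb'ge⟩ := hchord
  refine ⟨max (maxWelfareBelow W j) b', max_rec' _ hΛ hb', ?_⟩
  rw [breakpointValue_of_lt hj1]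
  exact max_le_max le_rfl (le_trans (by nlinarith) hb'ge)
termination_by n - j

theorem dualSlope_nonneg {j : ℕ} (hj : 1 ≤ j) : 0 ≤ dualSlope n W β j := by
  rw [dualSlope]
  split_ifs with hjn
  · obtain ⟨_, hlt⟩ := hβ (j - 1) (by omega)
    rw [Nat.sub_add_cancel hj] at hlt
    have hV := breakpointValue_le_succ (W := W) hβ (j := j - 1) (by omega)
    rw [Nat.sub_add_cancel hj] at hV
    exact div_nonneg (by linarith) (by linarith)
  · exact le_rfl

theorem dualIntercept_add_dualSlope_mul_self {j : ℕ} (hj : 1 ≤ j) (hjn : j < n) :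
    dualIntercept n W β j + dualSlope n W β j * β j = breakpointValue n W β j := by
  obtain ⟨_, hlt⟩ := hβ (j - 1) (by omega)
  rw [Nat.sub_add_cancel hj] at hlt
  rw [dualIntercept, dualSlope, if_pos hjn]
  field_simp [(sub_pos.2 hlt).ne']
  ring

theorem le_dualIntercept {j : ℕ} (hj : 1 ≤ j) (hjn : j ≤ n) : W j ≤ dualIntercept n W β j := by
  rcases hjn.lt_or_eq with hjn | rfl
  · obtain ⟨_, hlt⟩ := hβ (j - 1) (by omega)
    have hchord := mul_breakpointValue_succ_le (W := W) hβ (j := j - 1) (by omega)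
    rw [Nat.sub_add_cancel hj] at hlt hchord
    rw [dualIntercept, dualSlope, if_pos hjn, div_mul_eq_mul_div, le_sub_iff_add_le,
      ← le_sub_iff_add_le', div_le_iff₀ (sub_pos.2 hlt)]
    nlinarith
  · rw [dualIntercept, dualSlope, if_neg (lt_irrefl j), zero_mul, sub_zero]
    have := maxWelfareBelow_le_breakpointValue (n := j) (W := W) (β := β) (j - 1)
    have := le_maxWelfareBelow (W := W) (j := j - 1) (l := j) (by simp; omega)
    linarith

end BreakpointValue

theorem add_mul_le_add_mul_of_mem_Icc {a s a' s' x₀ x₁ x : ℝ} (h₀ : a + s * x₀ ≤ a' + s' * x₀)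
    (h₁ : a + s * x₁ ≤ a' + s' * x₁) (hx : x ∈ Set.Icc x₀ x₁) : a + s * x ≤ a' + s' * x := by
  obtain ⟨hx₀, hx₁⟩ := hx
  rcases le_total s s' with h | h <;> nlinarith

section Certificate

variable {n m : ℕ} {c : ℕ → ℝ} {F : ℕ → ℕ → ℝ} {r p β : ℕ → ℝ}

/-- The principal's utility from the free fall that starts in the region of action `h` and ends
at the breakpoint `β (j - 1)`, in action `j`. -/
noncomputable def freeFallValue (m : ℕ) (c : ℕ → ℝ) (F : ℕ → ℕ → ℝ) (r p β : ℕ → ℝ) (j h : ℕ) :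
    ℝ :=
  expRew m F r j - β (j - 1) * (expPay m F p j + welfarePotential (welfare m c F r) β j -
    welfarePotential (welfare m c F r) β h)

variable {B : ℝ} (hInst : PInstance n m c F r p) (hβ : Breakpoints n m c F p β)
  (hB : ∀ j h, 1 ≤ j → j ≤ h → h ≤ n → freeFallValue m c F r p β j h ≤ B)
include hInst hβ hB

theorem breakpointValue_sub_le {j i : ℕ} (hj : j < n) (hi : i ∈ BRp n m c F p (β j)) :
    breakpointValue n (welfare m c F r) β j - B ≤ β j * expPay m F p i - c i := by
  obtain ⟨b, hb, hVb⟩ := exists_ge_breakpointValue hβ.nonneg_and_lt_succ j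
  suffices b - B ≤ β j * expPay m F p i - c i by linarith
  rcases hb with ⟨l, ⟨hl1, hlj⟩, rfl⟩ | ⟨h, ⟨hjh, hhn⟩, rfl⟩
  · have hl : l ∈ Finset.Icc 1 n := Finset.mem_Icc.2 ⟨hl1, by omega⟩
    have hval := hB l l hl1 le_rfl (by omega)
    have hP := hInst.expPay_nonneg hl
    have hβl := hβ.le_of_le (show l - 1 ≤ j by omega) hj
    have hbest := agentUtil_le_of_mem_BRp hi hl
    simp only [freeFallValue, add_sub_cancel_right] at hval
    rw [welfare]
    nlinarith
  · have hval := hB (j + 1) h (by omega) hjh hhn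
    have hbest := agentUtil_le_of_mem_BRp (j := j + 1) hi (Finset.mem_Icc.2 ⟨by omega, by omega⟩)
    simp only [freeFallValue, Nat.add_sub_cancel] at hval
    rw [fallValue, welfare]
    linarith

theorem isDualCertificate :
    IsDualCertificate n m c F r p B
      (fun i => dualIntercept n (welfare m c F r) β i - B) (dualSlope n (welfare m c F r) β) := by
  have hβ' := hβ.nonneg_and_lt_succ
  refine ⟨fun i hi => dualSlope_nonneg hβ' (Finset.mem_Icc.1 hi).1,
    fun i hi => sub_le_sub_right (le_dualIntercept hβ' (Finset.mem_Icc.1 hi).1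
      (Finset.mem_Icc.1 hi).2) B,
    hβ.agreeOnBRp fun l hl hln => ?_, fun x hx i hi => ?_⟩
  · have := dualIntercept_add_dualSlope_mul (n := n) (W := welfare m c F r) (β := β) (l + 1)
    rw [Nat.add_sub_cancel] at this
    linarith [dualIntercept_add_dualSlope_mul_self (W := welfare m c F r) hβ' hl hln]
  obtain ⟨hi1, hin⟩ := Finset.mem_Icc.1 (mem_Icc_of_mem_BRp hi)
  obtain ⟨hlo, hhi⟩ := (hβ.mem_BRp_iff hx hi1 hin).1 hi
  have hbot := breakpointValue_sub_le hInst hβ hB (j := i - 1) (by omega)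
    (by simpa [Nat.sub_add_cancel hi1] using hβ.succ_mem_BRp (i := i - 1) (by omega))
  have hbot' := dualIntercept_add_dualSlope_mul (n := n) (W := welfare m c F r) (β := β) i
  rcases hin.lt_or_eq with hin | rfl
  · have htop := breakpointValue_sub_le hInst hβ hB hin (hβ.mem_BRp_self hi1 hin)
    have htop' := dualIntercept_add_dualSlope_mul_self (W := welfare m c F r) hβ' hi1 hin
    have := add_mul_le_add_mul_of_mem_Icc (a' := -c i) (s' := expPay m F p i)
      (a := dualIntercept n (welfare m c F r) β i - B) (s := dualSlope n (welfare m c F r) β i)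
      (by linarith) (by linarith) ⟨hlo, hhi hin⟩
    linarith
  · have hP := hInst.expPay_nonneg (Finset.mem_Icc.2 ⟨hi1, le_rfl⟩)
    rw [dualSlope, if_neg (lt_irrefl i)] at hbot' ⊢
    nlinarith

end Certificate

namespace DSC

variable {n m : ℕ} {c : ℕ → ℝ} {F : ℕ → ℕ → ℝ} {r p β : ℕ → ℝ}

theorem FreeFall.sum_eq {π : DSC} (hff : π.FreeFall) (hK : 1 ≤ π.K) (g : ℕ → ℝ) :
    ∑ k ∈ Finset.Icc 1 π.K, π.α k * g k = π.α 1 * g 1 := by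
  refine Finset.sum_eq_single_of_mem 1 (Finset.mem_Icc.2 ⟨le_rfl, hK⟩) fun k hk hk1 => ?_
  obtain ⟨h1, hkK⟩ := Finset.mem_Icc.1 hk
  rw [hff k (by omega) hkK, zero_mul]

/-- Since `W i - S i * x` (with `S` the welfare potential) agrees on best responses, it telescopes;
a free fall pays only in its first segment, where the average starts at `α 1`. -/
theorem Valid.Util_eq_of_freeFall {π : DSC} (hβ : Breakpoints n m c F p β)
    (hπ : π.Valid n m c F p) (hff : π.FreeFall) :
    π.Util m F r p = expRew m F r (π.a π.K) - π.avg π.K * (expPay m F p (π.a π.K) +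
      welfarePotential (welfare m c F r) β (π.a π.K) -
      welfarePotential (welfare m c F r) β (π.a 1)) := by
  set S := welfarePotential (welfare m c F r) β
  set P := expPay m F p
  have hagree : AgreeOnBRp n m c F p (welfare m c F r) (fun i => -S i) :=
    hβ.agreeOnBRp fun l hl hln => by
      linarith [mul_welfarePotential_succ_sub (W := welfare m c F r) hl (hβ.pos hl hln).ne']
  have htele := hπ.sum_affine_eq (hagree.sub agreeOnBRp_agentUtil)
  have hsplit : ∑ k ∈ Finset.Icc 1 π.K, π.τ k * (expRew m F r (π.a k) - π.α k * P (π.a k)) =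
      ∑ k ∈ Finset.Icc 1 π.K, π.τ k * ((welfare m c F r (π.a k) - -c (π.a k)) +
        (-S (π.a k) - P (π.a k)) * π.α k) +
      ∑ k ∈ Finset.Icc 1 π.K, π.α k * (π.τ k * S (π.a k)) := by
    rw [← Finset.sum_add_distrib]
    refine Finset.sum_congr rfl fun k _ => ?_
    rw [welfare]
    ring
  have hT := hπ.Tsum_pos hπ.1 le_rfl
  have hA := hπ.Tsum_mul_avg hπ.1 le_rfl
  rw [hff.sum_eq hπ.1 π.τ] at hA
  rw [Util, div_eq_iff hT.ne', hsplit, htele, hff.sum_eq hπ.1, welfare]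
  linear_combination -S (π.a 1) * hA

/-- The free fall that offers `lam 1 · p` for one unit of time and nothing afterwards, with
segment `k` ending when the average scalar has fallen to `lam k`. -/
noncomputable def freeFall (K : ℕ) (lam : ℕ → ℝ) (a : ℕ → ℕ) : DSC where
  K := K
  α k := if k = 1 then lam 1 else 0
  τ k := if k = 1 then 1 else lam 1 / lam k - lam 1 / lam (k - 1)
  a := a

variable {K : ℕ} {lam : ℕ → ℝ} {a : ℕ → ℕ}

theorem freeFall_K : (freeFall K lam a).K = K := rfl

theorem freeFall_a : (freeFall K lam a).a = a := rfl

theorem freeFall_freeFall : (freeFall K lam a).FreeFall :=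
  fun k hk _ => if_neg (by omega)

theorem Tsum_freeFall (hlam : lam 1 ≠ 0) {k : ℕ} (hk : 1 ≤ k) :
    (freeFall K lam a).Tsum k = lam 1 / lam k := by
  induction k, hk using Nat.le_induction with
  | base => simp [Tsum, freeFall, hlam]
  | succ k hk ih =>
    rw [Tsum_succ, ih]
    simp only [freeFall, if_neg (show k + 1 ≠ 1 by omega), Nat.add_sub_cancel]
    ring

theorem avg_freeFall (hlam : lam 1 ≠ 0) {k : ℕ} (hk : 1 ≤ k) :
    (freeFall K lam a).avg k = lam k := by
  have hA : ∑ j ∈ Finset.Icc 1 k, (freeFall K lam a).α j * (freeFall K lam a).τ j = lam 1 := by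
    rw [Finset.sum_eq_single_of_mem 1 (Finset.mem_Icc.2 ⟨le_rfl, hk⟩) fun j _ hj => by
      simp [freeFall, hj]]
    simp [freeFall]
  rw [avg, hA, Tsum_freeFall hlam hk, div_div_cancel₀ hlam]

theorem valid_freeFall (hK : 1 ≤ K) (hpos : ∀ k ∈ Finset.Icc 1 K, 0 < lam k)
    (hanti : ∀ k ∈ Finset.Icc 2 K, lam k < lam (k - 1))
    (hbr : ∀ k ∈ Finset.Icc 1 K, a k ∈ BRp n m c F p (lam k))
    (hbr' : ∀ k ∈ Finset.Icc 2 K, a k ∈ BRp n m c F p (lam (k - 1))) :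
    (freeFall K lam a).Valid n m c F p := by
  have hlam1 := hpos 1 (Finset.mem_Icc.2 ⟨le_rfl, hK⟩)
  refine ⟨hK, fun k hk => ⟨?_, ?_, mem_Icc_of_mem_BRp (hbr k hk)⟩, fun k hk => ?_,
    fun k h2 hk => ?_⟩
  · simp only [freeFall]
    split_ifs <;> linarith
  · obtain ⟨h1, hkK⟩ := Finset.mem_Icc.1 hk
    simp only [freeFall]
    split_ifs with hk1
    · exact one_pos
    · have := div_lt_div_of_pos_left hlam1 (hpos k hk) (hanti k (Finset.mem_Icc.2 ⟨by omega, hkK⟩))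
      linarith
  · rw [avg_freeFall hlam1.ne' (Finset.mem_Icc.1 hk).1]
    exact hbr k hk
  · rw [avg_freeFall hlam1.ne' (by omega)]
    exact hbr' k (Finset.mem_Icc.2 ⟨h2, hk⟩)

end DSC
section Witness

variable {n m : ℕ} {c : ℕ → ℝ} {F : ℕ → ℕ → ℝ} {r p β : ℕ → ℝ} (hβ : Breakpoints n m c F p β)
include hβ

theorem exists_freeFall_Util_eq_expRew_one (hn : 1 ≤ n) :
    ∃ π : DSC, π.Valid n m c F p ∧ π.FreeFall ∧ π.Util m F r p = expRew m F r 1 := by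
  have h1 : (1 : ℕ) ∈ BRp n m c F p 0 := hβ.1 ▸ hβ.succ_mem_BRp (i := 0) hn
  refine ⟨⟨1, fun _ => 0, fun _ => 1, fun _ => 1⟩,
    ⟨le_rfl, fun _ _ => ⟨le_rfl, one_pos, mem_Icc_of_mem_BRp h1⟩, fun k _ => ?_,
      fun k h2 (hk : k ≤ 1) => absurd h2 (by omega)⟩, fun _ _ _ => rfl, ?_⟩
  · simpa [DSC.avg] using h1
  · simp [DSC.Util, DSC.Tsum]

/-- Offer `x₀ · p` with `β (h - 1) < x₀` for one unit of time, then let the average fall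
through the regions of actions `h, h - 1, …, j`. -/
theorem exists_freeFall_to_breakpoint {j h : ℕ} (hj : 2 ≤ j) (hjh : j ≤ h) (hh : h ≤ n) :
    ∃ π : DSC, π.Valid n m c F p ∧ π.FreeFall ∧ π.a 1 = h ∧ π.a π.K = j ∧
      π.avg π.K = β (j - 1) := by
  obtain ⟨x₀, hx₀, hbr₀⟩ := hβ.exists_gt_mem_BRp (show 1 ≤ h by omega) hh
  have hx₀pos : 0 < x₀ := lt_of_le_of_lt (hβ.nonneg (show h - 1 < n by omega)) hx₀
  set lam : ℕ → ℝ := fun k => if k = 1 then x₀ else β (h + 1 - k)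
  set a : ℕ → ℕ := fun k => if k = 1 then h else h + 2 - k
  have hlam : ∀ k, 2 ≤ k → lam k = β (h + 1 - k) := fun k hk => if_neg (by omega)
  have ha : ∀ k, 2 ≤ k → a k = h + 2 - k := fun k hk => if_neg (by omega)
  have hπ : (DSC.freeFall (h + 2 - j) lam a).Valid n m c F p := by
    refine DSC.valid_freeFall (by omega) (fun k hk => ?_) (fun k hk => ?_) (fun k hk => ?_)
      (fun k hk => ?_) <;> obtain ⟨hk1, hkK⟩ := Finset.mem_Icc.1 hk
    · rcases hk1.lt_or_eq with hk1 | rfl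
      · rw [hlam k hk1]
        exact hβ.pos (by omega) (by omega)
      · exact hx₀pos
    · rcases hk1.lt_or_eq with hk1 | rfl
      · rw [hlam k (by omega), hlam (k - 1) (by omega), show h + 1 - (k - 1) = h + 2 - k by omega]
        exact hβ.strictMonoOn (show h + 1 - k < n by omega) (show h + 2 - k < n by omega)
          (by omega)
      · exact hx₀
    · rcases hk1.lt_or_eq with hk1 | rfl
      · rw [hlam k hk1, ha k hk1, show h + 2 - k = h + 1 - k + 1 by omega]
        exact hβ.succ_mem_BRp (by omega)
      · exact hbr₀
    · rcases hk1.lt_or_eq with hk1 | rfl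
      · rw [hlam (k - 1) (by omega), ha k (by omega), show h + 1 - (k - 1) = h + 2 - k by omega]
        exact hβ.mem_BRp_self (by omega) (by omega)
      · exact hbr₀
  refine ⟨_, hπ, DSC.freeFall_freeFall, rfl, ?_, ?_⟩
  · rw [DSC.freeFall_K, DSC.freeFall_a, ha _ (by omega)]
    omega
  · rw [DSC.freeFall_K, DSC.avg_freeFall hx₀pos.ne' (by omega), hlam _ (by omega),
      show h + 1 - (h + 2 - j) = j - 1 by omega]

theorem exists_freeFall_Util_eq {j h : ℕ} (hj : 1 ≤ j) (hjh : j ≤ h) (hh : h ≤ n) :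
    ∃ π : DSC, π.Valid n m c F p ∧ π.FreeFall ∧ π.Util m F r p = freeFallValue m c F r p β j h := by
  rcases hj.lt_or_eq with hj | rfl
  · obtain ⟨π, hπ, hff, ha1, haK, havg⟩ := exists_freeFall_to_breakpoint hβ hj hjh hh
    refine ⟨π, hπ, hff, ?_⟩
    rw [hπ.Util_eq_of_freeFall hβ hff, ha1, haK, havg, freeFallValue]
  · simpa [freeFallValue, hβ.1] using exists_freeFall_Util_eq_expRew_one (r := r) hβ (by omega)

end Witness

/-- Free-fall contracts are optimal among `p`-scaled dynamic
contracts: every valid `p`-scaled dynamic contract is dominated by a valid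
free-fall `p`-scaled contract. -/
theorem free_fall_optimal_p_scaled (n m : ℕ) (c : ℕ → ℝ) (F : ℕ → ℕ → ℝ)
    (r : ℕ → ℝ) (p : ℕ → ℝ) (β : ℕ → ℝ)
    (hInst : PInstance n m c F r p) (hβ : Breakpoints n m c F p β)
    (π : DSC) (hπ : π.Valid n m c F p) :
    ∃ π' : DSC, π'.Valid n m c F p ∧ π'.FreeFall ∧
      π'.Util m F r p ≥ π.Util m F r p := by
  obtain ⟨⟨j, h⟩, hjh, hmax⟩ := Finset.exists_max_image
    ((Finset.Icc 1 n ×ˢ Finset.Icc 1 n).filter fun q => q.1 ≤ q.2)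
    (fun q => freeFallValue m c F r p β q.1 q.2) ⟨(1, 1), by simp; linarith [hInst.1]⟩
  simp only [Finset.mem_filter, Finset.mem_product, Finset.mem_Icc] at hjh
  obtain ⟨π', hπ', hff, hUtil⟩ := exists_freeFall_Util_eq (r := r) hβ hjh.1.1.1 hjh.2 hjh.1.2.2
  refine ⟨π', hπ', hff, hUtil ▸ hπ.Util_le (isDualCertificate hInst hβ ?_)⟩
  intro j' h' hj' hjh' hh'
  exact hmax (j', h') (by simp only [Finset.mem_filter, Finset.mem_product, Finset.mem_Icc]; omega)
end
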